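/- For every fixed positive integer τ and κ > 0, (I_{p+τ}(κ) − I_{p−τ}(κ))/(I_p(κ) p^τ) → −2^τ/κ^τ as p → ∞ through the integers. -/

import Mathlib

/-!
Dividing the recurrence `I_n = (2(n+1)/κ) I_{n+1} + I_{n+2}` by `p I_{n+1}` at `n = p - j - 1`,
and using `I_{n+2} ≤ (κ/2) I_{n+1}`, gives `I_{p-j-1} / (p I_{p-j}) → 2/κ` for each fixed `j`;
the product of these ratios over `j < τ` telescopes to `I_{p-τ} / (p^τ I_p) → (2/κ)^τ`.
On the other side `I_{p+τ} ≤ (κ/2)^τ I_p`, so `I_{p+τ} / (p^τ I_p) → 0`.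
-/

open Real Filter

/-- The modified Bessel function of the first kind of nonnegative integer order. -/
noncomputable def besselI (p : ℕ) (κ : ℝ) : ℝ :=
  ∑' r : ℕ, (κ / 2) ^ (2 * r + p) / ((p + r).factorial * r.factorial)

noncomputable def besselITerm (p : ℕ) (κ : ℝ) (r : ℕ) : ℝ :=
  (κ / 2) ^ (2 * r + p) / ((p + r).factorial * r.factorial)

open Topology

lemma besselI_eq_tsum (p : ℕ) (κ : ℝ) : besselI p κ = ∑' r, besselITerm p κ r := rfl

lemma summable_besselITerm (p : ℕ) (κ : ℝ) : Summable (besselITerm p κ) := by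
  refine Summable.of_norm_bounded
    ((summable_pow_div_factorial (|κ / 2| ^ 2)).mul_left (|κ / 2| ^ p)) fun r => ?_
  have hfac : (1 : ℝ) ≤ (p + r).factorial := mod_cast (p + r).factorial_pos
  have hden : (0 : ℝ) < (p + r).factorial * r.factorial := by positivity
  rw [Real.norm_eq_abs, besselITerm, abs_div, abs_pow, abs_of_pos hden, pow_add, pow_mul,
    mul_comm, mul_div_assoc]
  gcongr
  exact le_mul_of_one_le_left (by positivity) hfac

lemma besselITerm_pos {κ : ℝ} (hκ : 0 < κ) (p r : ℕ) : 0 < besselITerm p κ r := by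
  unfold besselITerm; positivity

lemma besselI_pos {κ : ℝ} (hκ : 0 < κ) (p : ℕ) : 0 < besselI p κ :=
  (summable_besselITerm p κ).tsum_pos (fun r => (besselITerm_pos hκ p r).le) 0
    (besselITerm_pos hκ p 0)

lemma besselITerm_zero {κ : ℝ} (hκ : κ ≠ 0) (p : ℕ) :
    besselITerm p κ 0 = 2 * (p + 1) / κ * besselITerm (p + 1) κ 0 := by
  simp only [besselITerm, Nat.factorial_succ, add_zero]
  push_cast
  field_simp
  ring

lemma besselITerm_succ {κ : ℝ} (hκ : κ ≠ 0) (p r : ℕ) :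
    besselITerm p κ (r + 1) =
      2 * (p + 1) / κ * besselITerm (p + 1) κ (r + 1) + besselITerm (p + 2) κ r := by
  simp only [besselITerm, show p + 1 + (r + 1) = p + r + 2 by ring,
    show p + 2 + r = p + r + 2 by ring, show p + (r + 1) = p + r + 1 by ring,
    Nat.factorial_succ]
  rw [show 2 * (r + 1) + (p + 1) = 2 * r + p + 3 by ring,
    show 2 * (r + 1) + p = 2 * r + p + 2 by ring, show 2 * r + (p + 2) = 2 * r + p + 2 by ring]
  push_cast
  field_simp
  ring

theorem besselI_eq_mul_besselI_succ_add {κ : ℝ} (hκ : κ ≠ 0) (p : ℕ) :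
    besselI p κ = 2 * (p + 1) / κ * besselI (p + 1) κ + besselI (p + 2) κ := by
  have hE := (summable_besselITerm (p + 1) κ).mul_left (2 * (p + 1) / κ)
  have hE_succ := (summable_nat_add_iff 1).2 hE
  rw [besselI_eq_tsum, (summable_besselITerm p κ).tsum_eq_zero_add, besselITerm_zero hκ,
    tsum_congr (besselITerm_succ hκ p), hE_succ.tsum_add (summable_besselITerm (p + 2) κ),
    besselI_eq_tsum, besselI_eq_tsum, ← tsum_mul_left, hE.tsum_eq_zero_add]
  ring

lemma besselI_succ_le {κ : ℝ} (hκ : 0 ≤ κ) (p : ℕ) :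
    besselI (p + 1) κ ≤ κ / 2 * besselI p κ := by
  rw [besselI_eq_tsum, besselI_eq_tsum, ← tsum_mul_left]
  refine (summable_besselITerm _ κ).tsum_le_tsum (fun r => ?_)
    ((summable_besselITerm p κ).mul_left _)
  have hpr : (1 : ℝ) ≤ p + r + 1 := by linarith [(by positivity : (0 : ℝ) ≤ p + r)]
  simp only [besselITerm, show p + 1 + r = p + r + 1 by ring,
    show 2 * r + (p + 1) = 2 * r + p + 1 by ring, pow_succ, Nat.factorial_succ]
  push_cast
  calc _ = (κ / 2) ^ (2 * r + p) / ((p + r).factorial * r.factorial) * (κ / 2) / (p + r + 1) :=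
        by field_simp
    _ ≤ _ := (div_le_self (by positivity) hpr).trans_eq (mul_comm _ _)

lemma besselI_add_le {κ : ℝ} (hκ : 0 ≤ κ) (p τ : ℕ) :
    besselI (p + τ) κ ≤ (κ / 2) ^ τ * besselI p κ := by
  induction τ with
  | zero => simp
  | succ t ih =>
    calc besselI (p + t + 1) κ ≤ κ / 2 * besselI (p + t) κ := besselI_succ_le hκ _
      _ ≤ κ / 2 * ((κ / 2) ^ t * besselI p κ) := by gcongr
      _ = (κ / 2) ^ (t + 1) * besselI p κ := by ring

lemma tendsto_div_natCast_pow_of_bounded {a : ℕ → ℝ} {C : ℝ} (h0 : ∀ p, 0 ≤ a p)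
    (hC : ∀ p, a p ≤ C) {τ : ℕ} (hτ : τ ≠ 0) :
    Tendsto (fun p : ℕ => a p / (p : ℝ) ^ τ) atTop (𝓝 0) := by
  have hpow : Tendsto (fun p : ℕ => (p : ℝ) ^ τ) atTop atTop :=
    (tendsto_pow_atTop hτ).comp tendsto_natCast_atTop_atTop
  refine tendsto_of_tendsto_of_tendsto_of_le_of_le tendsto_const_nhds
    ((tendsto_const_nhds (x := C)).div_atTop hpow) (fun p => ?_) (fun p => ?_)
  · exact div_nonneg (h0 p) (by positivity)
  · exact div_le_div_of_nonneg_right (hC p) (by positivity)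

lemma tendsto_besselI_add_div {κ : ℝ} (hκ : 0 < κ) {τ : ℕ} (hτ : τ ≠ 0) :
    Tendsto (fun p : ℕ => besselI (p + τ) κ / (besselI p κ * (p : ℝ) ^ τ)) atTop (𝓝 0) := by
  have hbound (p : ℕ) : besselI (p + τ) κ / besselI p κ ≤ (κ / 2) ^ τ :=
    div_le_of_le_mul₀ (besselI_pos hκ p).le (by positivity) (besselI_add_le hκ.le p τ)
  simpa only [div_div] using tendsto_div_natCast_pow_of_bounded
    (fun p => div_nonneg (besselI_pos hκ _).le (besselI_pos hκ p).le) hbound hτ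

lemma tendsto_besselI_sub_succ_div {κ : ℝ} (hκ : 0 < κ) (j : ℕ) :
    Tendsto (fun p : ℕ => besselI (p - (j + 1)) κ / (besselI (p - j) κ * p)) atTop
      (𝓝 (2 / κ)) := by
  have hmain : Tendsto (fun p : ℕ => 2 / κ * (1 - (j : ℝ) / p)) atTop (𝓝 (2 / κ)) := by
    simpa using ((tendsto_const_nhds (x := (1 : ℝ))).sub
      (tendsto_const_div_atTop_nhds_zero_nat (j : ℝ))).const_mul (2 / κ)
  have hrest : Tendsto (fun p : ℕ => besselI (p - j + 1) κ / besselI (p - j) κ / (p : ℝ) ^ 1)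
      atTop (𝓝 0) :=
    tendsto_div_natCast_pow_of_bounded
      (fun p => div_nonneg (besselI_pos hκ _).le (besselI_pos hκ _).le)
      (fun p => div_le_of_le_mul₀ (besselI_pos hκ _).le (by positivity) (besselI_succ_le hκ.le _))
      one_ne_zero
  refine (by simpa using hmain.add hrest : Tendsto _ atTop (𝓝 (2 / κ))).congr' ?_
  filter_upwards [eventually_gt_atTop j] with p hp
  obtain ⟨n, rfl⟩ : ∃ n, p = n + j + 1 := ⟨p - (j + 1), by omega⟩
  rw [show n + j + 1 - (j + 1) = n by omega, show n + j + 1 - j = n + 1 by omega,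
    besselI_eq_mul_besselI_succ_add hκ.ne' n]
  have hI := besselI_pos hκ (n + 1)
  push_cast
  field_simp
  ring

lemma tendsto_besselI_sub_div {κ : ℝ} (hκ : 0 < κ) (τ : ℕ) :
    Tendsto (fun p : ℕ => besselI (p - τ) κ / (besselI p κ * (p : ℝ) ^ τ)) atTop
      (𝓝 ((2 / κ) ^ τ)) := by
  induction τ with
  | zero => simp [div_self (besselI_pos hκ _).ne']
  | succ t ih =>
    rw [pow_succ']
    refine ((tendsto_besselI_sub_succ_div hκ t).mul ih).congr' ?_
    filter_upwards [eventually_ne_atTop 0] with p hp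
    have hI_sub := besselI_pos hκ (p - t)
    have hI := besselI_pos hκ p
    field_simp
    ring

/-- `(I_{p+τ}(κ) - I_{p-τ}(κ)) / (I_p(κ) p^τ) → -2^τ/κ^τ` as `p → ∞`. -/
theorem besselI_diff_ratio_limit (κ : ℝ) (hκ : 0 < κ) (τ : ℕ) (hτ : 0 < τ) :
    Tendsto (fun p : ℕ => (besselI (p + τ) κ - besselI (p - τ) κ) / (besselI p κ * p ^ τ))
      atTop (nhds (-(2 ^ τ / κ ^ τ))) := by
  have h := (tendsto_besselI_add_div hκ hτ.ne').sub (tendsto_besselI_sub_div hκ τ)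
  rw [zero_sub, div_pow] at h
  simpa only [sub_div] using h
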